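/- Let f : [-1,1] → [-1,1] be a piecewise-linear map with f(0) = 0 such that f restricted to [0,1] and to [-1,0] are both non-constant, and let t_f be its radial contour factor. If ⟨x₁,x₂⟩ is a radial departure of f, then there exists a radial departure ⟨y₁,y₂⟩ of t_f such that for every continuous map s : [-1,1] → [-1,1] with s(0) = 0 and f = t_f ∘ s: ⟨x₁,x₂⟩ is a positive radial departure of s, and s(x₁) = y₁, s(x₂) = y₂. -/

import Mathlib

open Set

/-- A positive radial departure of `f`. -/
def PosRD (f : ℝ → ℝ) (x₁ x₂ : ℝ) : Prop :=
  -1 ≤ x₁ ∧ x₁ < 0 ∧ 0 < x₂ ∧ x₂ ≤ 1 ∧ f '' Ioo x₁ x₂ = Ioo (f x₁) (f x₂)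

/-- A negative radial departure of `f`. -/
def NegRD (f : ℝ → ℝ) (x₁ x₂ : ℝ) : Prop :=
  -1 ≤ x₁ ∧ x₁ < 0 ∧ 0 < x₂ ∧ x₂ ≤ 1 ∧ f '' Ioo x₁ x₂ = Ioo (f x₂) (f x₁)

/-- A radial departure of `f` (of either orientation). -/
def RadialDeparture (f : ℝ → ℝ) (x₁ x₂ : ℝ) : Prop := PosRD f x₁ x₂ ∨ NegRD f x₁ x₂

/-- A (right) departure of `g` (viewed as a map on `[0,1]`). -/
def Departure (g : ℝ → ℝ) (x : ℝ) : Prop := 0 < x ∧ x ≤ 1 ∧ g x ∉ g '' Ico 0 x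

/-- A left departure of `g` (viewed as a map on `[-1,0]`). -/
def LeftDeparture (g : ℝ → ℝ) (x : ℝ) : Prop := -1 ≤ x ∧ x < 0 ∧ g x ∉ g '' Ioc x 0

/-- A (right) contour point of `g`: a departure `α` such that every departure past `α`
is preceded (within `(α, x]`) by a departure of orientation opposite to that of `α`. -/
def ContourPoint (g : ℝ → ℝ) (α : ℝ) : Prop :=
  Departure g α ∧
    ∀ x, Departure g x → α < x → ∃ y, Departure g y ∧ α < y ∧ y ≤ x ∧ g α * g y < 0

/-- `[ym, yp]` is a liftable range for `t`. -/
def LiftableRange (t : ℝ → ℝ) (ym yp : ℝ) : Prop :=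
  -1 ≤ ym ∧ ym ≤ 0 ∧ 0 ≤ yp ∧ yp ≤ 1 ∧
  t '' Icc ym 0 ⊆ t '' Icc 0 1 ∧
  ¬ ∃ y₁ y₂, RadialDeparture t y₁ y₂ ∧ ym ≤ y₁ ∧ yp < y₂

/-- `f` is linear (affine) on the interval `[a,b]`. -/
def LinearOn (f : ℝ → ℝ) (a b : ℝ) : Prop :=
  ∀ x ∈ Icc a b, (b - a) * f x = (b - x) * f a + (x - a) * f b

/-- `f` is piecewise-linear on `[-1,1]`. -/
def PiecewiseLinear (f : ℝ → ℝ) : Prop :=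
  ∃ n : ℕ, ∃ c : ℕ → ℝ, c 0 = -1 ∧ c n = 1 ∧ (∀ i < n, c i < c (i + 1)) ∧
    ∀ i < n, LinearOn f (c i) (c (i + 1))

/-- `t` is the contour factor of `g` (for maps on `[0,1]`): the contour points of `g`
are `0 = α₀ < α₁ < ⋯ < α_n`, `t (i/n) = g (α i)`, and `t` is linear in between. -/
def IsContourFactor (g t : ℝ → ℝ) : Prop :=
  ∃ n : ℕ, 0 < n ∧ ∃ α : ℕ → ℝ, α 0 = 0 ∧ (∀ i < n, α i < α (i + 1)) ∧
    (∀ x, ContourPoint g x ↔ ∃ i, 1 ≤ i ∧ i ≤ n ∧ x = α i) ∧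
    (∀ i ≤ n, t ((i : ℝ) / (n : ℝ)) = g (α i)) ∧
    (∀ i < n, LinearOn t ((i : ℝ) / (n : ℝ)) (((i : ℝ) + 1) / (n : ℝ)))

/-- `t` is the radial contour factor of `f`: its restriction to `[0,1]` is the contour
factor of `f|[0,1]`, and `t|[-1,0] ∘ r` is the contour factor of `f|[-1,0] ∘ r`,
where `r x = -x`. -/
def IsRadialContourFactor (f t : ℝ → ℝ) : Prop :=
  IsContourFactor f t ∧ IsContourFactor (fun x => f (-x)) (fun x => t (-x))

/-- `f` is non-constant on each of `[0,1]` and `[-1,0]`. -/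
def NonConstSides (f : ℝ → ℝ) : Prop :=
  (∃ a ∈ Icc (0:ℝ) 1, ∃ b ∈ Icc (0:ℝ) 1, f a ≠ f b) ∧
  (∃ a ∈ Icc (-1:ℝ) 0, ∃ b ∈ Icc (-1:ℝ) 0, f a ≠ f b)

/-!
Let `⟨x₁, x₂⟩` be a positive radial departure of `f`: on `(x₁, x₂)` the map `f` stays in the band
`(f x₁, f x₂)`, which it leaves through the top at `x₂` and through the bottom at `x₁`. On `[0, 1]`,
the first point where `f` attains its maximum over `[0, x₂]` is a contour point, and a contour point
below the band would be preceded by such a point above it; hence the first contour point outside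
the band lies above it. As `t` interpolates `f` linearly between consecutive contour points, `t`
also leaves the band first through the top, at some `y₂`; symmetrically it leaves through the
bottom at some `y₁ < 0`, and `⟨y₁, y₂⟩` is a positive radial departure of `t`. If `f = t ∘ s`,
then `s` cannot meet `y₁` or `y₂` on `(x₁, x₂)`, so by connectedness it maps `(x₁, x₂)` into
`(y₁, y₂)`, which forces `s x₁ = y₁` and `s x₂ = y₂`. Negative departures reduce to positive ones
by negating `f` and `t`.
-/

open Pointwise

section LinearOn

variable {f : ℝ → ℝ} {a b : ℝ}

lemma LinearOn.continuousOn (h : LinearOn f a b) : ContinuousOn f (Icc a b) := by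
  rcases lt_or_ge a b with hab | hba
  · refine ContinuousOn.congr (f := fun x => ((b - x) * f a + (x - a) * f b) / (b - a))
      (by fun_prop) fun x hx => ?_
    rw [eq_div_iff (sub_pos.2 hab).ne']
    linarith [h x hx]
  · exact (subsingleton_Icc_of_ge hba).continuousOn f

lemma LinearOn.mem_uIcc (h : LinearOn f a b) {x : ℝ} (hx : x ∈ Icc a b) :
    f x ∈ uIcc (f a) (f b) := by
  have hfx := h x hx
  obtain ⟨hax, hxb⟩ := hx
  rcases (hax.trans hxb).eq_or_lt with rfl | hab
  · obtain rfl : x = a := le_antisymm hxb hax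
    exact left_mem_uIcc
  rcases le_total (f a) (f b) with hf | hf
  · rw [uIcc_of_le hf]
    constructor <;> nlinarith [mul_nonneg (sub_nonneg.2 hax) (sub_nonneg.2 hf),
      mul_nonneg (sub_nonneg.2 hxb) (sub_nonneg.2 hf)]
  · rw [uIcc_of_ge hf]
    constructor <;> nlinarith [mul_nonneg (sub_nonneg.2 hax) (sub_nonneg.2 hf),
      mul_nonneg (sub_nonneg.2 hxb) (sub_nonneg.2 hf)]

lemma LinearOn.strictMonoOn (h : LinearOn f a b) (hf : f a < f b) :
    StrictMonoOn f (Icc a b) := by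
  intro u hu v hv huv
  have hslope : (b - a) * (f v - f u) = (v - u) * (f b - f a) := by
    linear_combination h v hv - h u hu
  have hba : 0 < b - a := by linarith [hu.1, hv.2]
  nlinarith [mul_pos (sub_pos.2 huv) (sub_pos.2 hf)]

lemma LinearOn.exists_eq_of_lt_of_le (h : LinearOn f a b) (hab : a ≤ b) {B : ℝ}
    (ha : f a < B) (hb : B ≤ f b) :
    ∃ y ∈ Ioc a b, f y = B ∧ MapsTo f (Ico a y) (Ico (f a) B) := by
  obtain ⟨y, hy, rfl⟩ := intermediate_value_Icc hab h.continuousOn ⟨ha.le, hb⟩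
  have hmono := h.strictMonoOn (ha.trans_le hb)
  have hay : a < y := hy.1.lt_of_ne (by rintro rfl; exact ha.false)
  refine ⟨y, ⟨hay, hy.2⟩, rfl, fun u hu => ⟨?_, hmono ⟨hu.1, hu.2.le.trans hy.2⟩ hy hu.2⟩⟩
  exact hmono.monotoneOn (left_mem_Icc.2 hab) ⟨hu.1, hu.2.le.trans hy.2⟩ hu.1

end LinearOn

section Chain

variable {f : ℝ → ℝ} {c : ℕ → ℝ}

lemma continuousOn_of_linearOn_chain :
    ∀ {n : ℕ}, (∀ i < n, LinearOn f (c i) (c (i + 1))) → ContinuousOn f (Icc (c 0) (c n))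
  | 0, _ => by simp
  | n + 1, hl =>
    ((continuousOn_of_linearOn_chain fun i hi => hl i (by omega)).union_of_isClosed
      (hl n n.lt_succ_self).continuousOn isClosed_Icc isClosed_Icc).mono
      (Icc_subset_Icc_union_Icc (b := c n))

lemma mapsTo_of_linearOn_chain {I : Set ℝ} (hI : I.OrdConnected) :
    ∀ {n : ℕ}, (∀ i < n, LinearOn f (c i) (c (i + 1))) → (∀ i ≤ n, f (c i) ∈ I) →
      MapsTo f (Icc (c 0) (c n)) I
  | 0, _, hnode => by simpa using hnode 0 le_rfl
  | n + 1, hl, hnode => fun x hx => by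
    rcases Icc_subset_Icc_union_Icc (b := c n) hx with hx | hx
    · exact mapsTo_of_linearOn_chain hI (fun i hi => hl i (by omega))
        (fun i hi => hnode i (by omega)) hx
    · exact hI.uIcc_subset (hnode n (by omega)) (hnode (n + 1) le_rfl)
        ((hl n n.lt_succ_self).mem_uIcc hx)

lemma exists_exit_of_linearOn_chain {p : ℕ} {A B : ℝ} (hc : c p ≤ c (p + 1))
    (hl : ∀ i ≤ p, LinearOn f (c i) (c (i + 1))) (hnode : ∀ i ≤ p, f (c i) ∈ Ioo A B)
    (hB : B ≤ f (c (p + 1))) :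
    ∃ y ∈ Ioc (c p) (c (p + 1)), f y = B ∧ MapsTo f (Ico (c 0) y) (Ioo A B) := by
  have hbefore := mapsTo_of_linearOn_chain ordConnected_Ioo (fun i hi => hl i hi.le) hnode
  obtain ⟨y, hy, hfy, hlast⟩ :=
    (hl p le_rfl).exists_eq_of_lt_of_le hc (hnode p le_rfl).2 hB
  refine ⟨y, hy, hfy, fun u hu => ?_⟩
  rcases le_or_gt u (c p) with hup | hpu
  · exact hbefore ⟨hu.1, hup⟩
  · obtain ⟨h₁, h₂⟩ := hlast ⟨hpu.le, hu.2⟩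
    exact ⟨(hnode p le_rfl).1.trans_le h₁, h₂⟩

end Chain

lemma PiecewiseLinear.continuousOn {f : ℝ → ℝ} (h : PiecewiseLinear f) :
    ContinuousOn f (Icc (-1) 1) := by
  obtain ⟨n, c, hc0, hcn, -, hl⟩ := h
  simpa [hc0, hcn] using continuousOn_of_linearOn_chain hl

section Neg

variable {g τ : ℝ → ℝ}

lemma image_neg_fun (S : Set ℝ) : (-g) '' S = -(g '' S) := by
  rw [← image_neg_eq_neg, ← image_comp]
  rfl

lemma departure_neg_iff {x : ℝ} : Departure (-g) x ↔ Departure g x := by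
  rw [Departure, Departure, image_neg_fun, Pi.neg_apply, neg_mem_neg]

lemma contourPoint_neg_iff {x : ℝ} : ContourPoint (-g) x ↔ ContourPoint g x := by
  simp only [ContourPoint, departure_neg_iff, Pi.neg_apply, neg_mul_neg]

lemma IsContourFactor.neg (h : IsContourFactor g τ) : IsContourFactor (-g) (-τ) := by
  obtain ⟨n, hn, α, hα0, hα, hcp, hnode, hlin⟩ := h
  refine ⟨n, hn, α, hα0, hα, fun x => contourPoint_neg_iff.trans (hcp x),
    fun i hi => by simp [hnode i hi], fun i hi x hx => ?_⟩
  simp only [Pi.neg_apply]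
  linear_combination -hlin i hi x hx

lemma posRD_neg_iff {x₁ x₂ : ℝ} : PosRD (-g) x₁ x₂ ↔ NegRD g x₁ x₂ := by
  rw [PosRD, NegRD, image_neg_fun, Pi.neg_apply, Pi.neg_apply, ← neg_Ioo, neg_inj]

end Neg

lemma IsContourFactor.apply_zero {g τ : ℝ → ℝ} (h : IsContourFactor g τ) (hg0 : g 0 = 0) :
    τ 0 = 0 := by
  obtain ⟨n, -, α, hα0, -, -, hnode, -⟩ := h
  simpa [hα0, hg0] using hnode 0 n.zero_le

lemma IsContourFactor.continuousOn {g τ : ℝ → ℝ} (h : IsContourFactor g τ) :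
    ContinuousOn τ (Icc 0 1) := by
  obtain ⟨n, hn, -, -, -, -, -, hlin⟩ := h
  have hn' : (n : ℝ) ≠ 0 := by positivity
  simpa [hn'] using continuousOn_of_linearOn_chain (f := τ) (c := fun i : ℕ => (i : ℝ) / n)
    (n := n) fun i hi => by simpa using hlin i hi

lemma IsRadialContourFactor.continuousOn {f t : ℝ → ℝ} (h : IsRadialContourFactor f t) :
    ContinuousOn t (Icc (-1) 1) := by
  have hleft : ContinuousOn t (Icc (-1) 0) := by
    have hmaps : MapsTo (fun x : ℝ => -x) (Icc (-1) 0) (Icc 0 1) := fun x hx =>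
      ⟨neg_nonneg.2 hx.2, neg_le.1 hx.1⟩
    simpa [Function.comp_def] using h.2.continuousOn.comp continuousOn_neg hmaps
  rw [← Icc_union_Icc_eq_Icc (by norm_num : (-1 : ℝ) ≤ 0) zero_le_one]
  exact hleft.union_of_isClosed h.1.continuousOn isClosed_Icc isClosed_Icc

lemma IsRadialContourFactor.neg {f t : ℝ → ℝ} (h : IsRadialContourFactor f t) :
    IsRadialContourFactor (-f) (-t) :=
  ⟨h.1.neg, h.2.neg⟩

section ContourPoints

variable {g : ℝ → ℝ}

/-- The first point where `g` attains its maximum over `[0, e]` is a contour point. -/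
lemma exists_contourPoint_ge (hgc : ContinuousOn g (Icc 0 1)) (hg0 : g 0 = 0) {e B z : ℝ}
    (he : e ≤ 1) (hB : 0 < B) (hz : z ∈ Icc 0 e) (hBz : B ≤ g z)
    (hbeyond : ∀ x, Departure g x → e < x → ∃ y, Departure g y ∧ e ≤ y ∧ y ≤ x ∧ g y < 0) :
    ∃ w, ContourPoint g w ∧ w ≤ e ∧ B ≤ g w := by
  have hgce : ContinuousOn g (Icc 0 e) := hgc.mono (Icc_subset_Icc_right he)
  obtain ⟨x₀, hx₀, hmax⟩ := isCompact_Icc.exists_isMaxOn ⟨z, hz⟩ hgce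
  obtain ⟨w, ⟨hw, hgw⟩, hwfirst⟩ :=
    (isCompact_Icc.of_isClosed_subset (hgce.preimage_isClosed_of_isClosed isClosed_Icc
      (isClosed_singleton (x := g x₀))) inter_subset_left).exists_isLeast ⟨x₀, hx₀, rfl⟩
  rw [mem_preimage, mem_singleton_iff] at hgw
  have hBw : B ≤ g w := hgw ▸ hBz.trans (hmax hz)
  have hw0 : 0 < w := hw.1.lt_of_ne (by rintro rfl; linarith)
  refine ⟨w, ⟨⟨hw0, hw.2.trans he, ?_⟩, fun x hx hwx => ?_⟩, hw.2, hBw⟩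
  · rintro ⟨v, hv, hgv⟩
    exact hv.2.not_ge (hwfirst ⟨⟨hv.1, hv.2.le.trans hw.2⟩, hgv.trans hgw⟩)
  rcases le_or_gt x e with hxe | hex
  · refine ⟨x, hx, hwx, le_rfl, mul_neg_of_pos_of_neg (hB.trans_le hBw) ?_⟩
    by_contra! hgx
    have himg : IsPreconnected (g '' Ico 0 x) := isPreconnected_Ico.image g
      (hgce.mono (Ico_subset_Icc_self.trans (Icc_subset_Icc_right hxe)))
    exact hx.2.2 (himg.Icc_subset ⟨0, ⟨le_rfl, hw0.trans hwx⟩, hg0⟩ ⟨w, ⟨hw.1, hwx⟩, rfl⟩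
      ⟨hgx, hgw ▸ hmax ⟨(hw0.trans hwx).le, hxe⟩⟩)
  · obtain ⟨y, hy, hey, hyx, hgy⟩ := hbeyond x hx hex
    exact ⟨y, hy, (hw.2.trans hey).lt_of_ne (by rintro rfl; linarith), hyx,
      mul_neg_of_pos_of_neg (hB.trans_le hBw) hgy⟩

lemma exists_contourPoint_ge_of_le {A B e w : ℝ} (hgc : ContinuousOn g (Icc 0 1))
    (hg0 : g 0 = 0) (hA : A < 0) (hB : 0 < B) (he : e ∈ Ioc 0 1)
    (hin : MapsTo g (Ioo 0 e) (Ioo A B)) (hge : g e = B) (hw : ContourPoint g w)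
    (hwA : g w ≤ A) : ∃ w' < w, ContourPoint g w' ∧ B ≤ g w' := by
  have hew : e < w := by
    by_contra! hwe
    rcases hwe.lt_or_eq with hwe | rfl
    · exact (hin ⟨hw.1.1, hwe⟩).1.not_ge hwA
    · linarith
  obtain ⟨w', hw', hw'w, hBw'⟩ := exists_contourPoint_ge hgc hg0 hw.1.2.1 hB
    ⟨he.1.le, hew.le⟩ hge.ge fun x hx hwx => ⟨w, hw.1, le_rfl, hwx.le, by linarith⟩
  exact ⟨w', hw'w.lt_of_ne (by rintro rfl; linarith), hw', hBw'⟩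

lemma exists_first_node_ge {n : ℕ} {α : ℕ → ℝ} (hα0 : α 0 = 0)
    (hα : ∀ i < n, α i < α (i + 1))
    (hcp : ∀ x, ContourPoint g x ↔ ∃ i, 1 ≤ i ∧ i ≤ n ∧ x = α i)
    (hgc : ContinuousOn g (Icc 0 1)) (hg0 : g 0 = 0) {A B e : ℝ} (hA : A < 0) (hB : 0 < B)
    (he : e ∈ Ioc 0 1) (hin : MapsTo g (Ioo 0 e) (Ioo A B)) (hge : g e = B) :
    ∃ p < n, (∀ k ≤ p, g (α k) ∈ Ioo A B) ∧ B ≤ g (α (p + 1)) := by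
  classical
  have hP : ∃ i, 1 ≤ i ∧ i ≤ n ∧ g (α i) ∉ Ioo A B := by
    obtain ⟨w, hw, -, hBw⟩ := exists_contourPoint_ge hgc hg0 le_rfl hB ⟨he.1.le, he.2⟩ hge.ge
      fun x hx hx1 => (hx.2.1.not_gt hx1).elim
    obtain ⟨i, hi1, hin', rfl⟩ := (hcp w).1 hw
    exact ⟨i, hi1, hin', fun h => h.2.not_ge hBw⟩
  obtain ⟨hi1, hin', hout⟩ := Nat.find_spec hP
  have hbelow : ∀ k < Nat.find hP, g (α k) ∈ Ioo A B := by
    intro k hk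
    rcases k.eq_zero_or_pos with rfl | hk0
    · simpa [hα0, hg0] using ⟨hA, hB⟩
    · by_contra hkout
      exact Nat.find_min hP hk ⟨hk0, by omega, hkout⟩
  refine ⟨Nat.find hP - 1, by omega, fun k hk => hbelow k (by omega), ?_⟩
  rw [Nat.sub_add_cancel hi1]
  by_contra! hiB
  obtain ⟨w, hwi, hw, hBw⟩ := exists_contourPoint_ge_of_le hgc hg0 hA hB he hin hge
    ((hcp _).2 ⟨_, hi1, hin', rfl⟩) (not_lt.1 fun hAi => hout ⟨hAi, hiB⟩)
  obtain ⟨k, -, hkn, rfl⟩ := (hcp w).1 hw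
  have hki : k < Nat.find hP :=
    ((strictMonoOn_Iic_of_lt_succ hα).lt_iff_lt (mem_Iic.2 hkn) (mem_Iic.2 hin')).1 hwi
  exact (hbelow k hki).2.not_ge hBw

end ContourPoints

lemma IsContourFactor.exists_exit {g τ : ℝ → ℝ} (hfac : IsContourFactor g τ)
    (hgc : ContinuousOn g (Icc 0 1)) (hg0 : g 0 = 0) {A B e : ℝ} (hA : A < 0) (hB : 0 < B)
    (he : e ∈ Ioc 0 1) (hin : MapsTo g (Ioo 0 e) (Ioo A B)) (hge : g e = B) :
    ∃ y ∈ Ioc 0 1, τ y = B ∧ MapsTo τ (Ioo 0 y) (Ioo A B) := by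
  obtain ⟨n, hn, α, hα0, hα, hcp, hnode, hlin⟩ := hfac
  obtain ⟨p, hpn, hbelow, hp⟩ := exists_first_node_ge hα0 hα hcp hgc hg0 hA hB he hin hge
  have hn' : (0 : ℝ) < n := by exact_mod_cast hn
  have hnode' : ∀ k ≤ n, τ ((k : ℕ) / n) = g (α k) := hnode
  obtain ⟨y, hy, hτy, hmaps⟩ := exists_exit_of_linearOn_chain (f := τ)
    (c := fun k : ℕ => (k : ℝ) / n) (p := p) (by gcongr; simp)
    (fun k hk => by simpa using hlin k (by omega))
    (fun k hk => hnode' k (by omega) ▸ hbelow k hk) (hnode' (p + 1) hpn ▸ hp)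
  refine ⟨y, ⟨lt_of_le_of_lt (by positivity) hy.1, hy.2.trans ?_⟩, hτy,
    fun u hu => hmaps ⟨by simpa using hu.1.le, hu.2⟩⟩
  rw [div_le_one hn']
  exact_mod_cast hpn

lemma IsPreconnected.subset_Ioo {S : Set ℝ} (hS : IsPreconnected S) {a b c : ℝ}
    (hc : c ∈ S) (hcab : c ∈ Ioo a b) (ha : a ∉ S) (hb : b ∉ S) : S ⊆ Ioo a b := by
  intro x hx
  by_contra hout
  rcases le_or_gt x a with hxa | hax
  · exact ha (hS.Icc_subset hx hc ⟨hxa, hcab.1.le⟩)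
  · exact hb (hS.Icc_subset hc hx ⟨hcab.2.le, not_lt.1 fun hxb => hout ⟨hax, hxb⟩⟩)

lemma posRD_of_mapsTo {t : ℝ → ℝ} {y₁ y₂ : ℝ} (hy₁ : -1 ≤ y₁) (hy₁0 : y₁ < 0) (hy₂0 : 0 < y₂)
    (hy₂ : y₂ ≤ 1) (htc : ContinuousOn t (Icc y₁ y₂))
    (hmaps : MapsTo t (Ioo y₁ y₂) (Ioo (t y₁) (t y₂))) : PosRD t y₁ y₂ :=
  ⟨hy₁, hy₁0, hy₂0, hy₂,
    hmaps.image_subset.antisymm (intermediate_value_Ioo (hy₁0.trans hy₂0).le htc)⟩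

lemma PosRD.lift {f t s : ℝ → ℝ} {x₁ x₂ y₁ y₂ : ℝ} (hf : PosRD f x₁ x₂) (ht : PosRD t y₁ y₂)
    (h₁ : t y₁ = f x₁) (h₂ : t y₂ = f x₂) (hs : Continuous s) (hs0 : s 0 = 0)
    (hfts : f = t ∘ s) : PosRD s x₁ x₂ ∧ s x₁ = y₁ ∧ s x₂ = y₂ := by
  obtain ⟨hx₁, hx₁0, hx₂0, hx₂, hfimg⟩ := hf
  obtain ⟨-, hy₁0, hy₂0, -, htimg⟩ := ht
  have hts : ∀ x, t (s x) = f x := fun x => (congrFun hfts x).symm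
  have hfmaps : MapsTo f (Ioo x₁ x₂) (Ioo (f x₁) (f x₂)) := hfimg ▸ mapsTo_image f _
  have htmaps : MapsTo t (Ioo y₁ y₂) (Ioo (f x₁) (f x₂)) := h₁ ▸ h₂ ▸ htimg ▸ mapsTo_image t _
  have hf₁₂ : f x₁ < f x₂ := (hfmaps ⟨hx₁0, hx₂0⟩).1.trans (hfmaps ⟨hx₁0, hx₂0⟩).2
  -- `s` cannot reach `y₁` or `y₂` on `(x₁, x₂)`, where `f` stays strictly between its end values
  have hsmaps : MapsTo s (Ioo x₁ x₂) (Ioo y₁ y₂) := by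
    refine image_subset_iff.1 <| (isPreconnected_Ioo.image s hs.continuousOn).subset_Ioo
      ⟨0, ⟨hx₁0, hx₂0⟩, hs0⟩ ⟨hy₁0, hy₂0⟩ ?_ ?_
    · rintro ⟨x, hx, hsx⟩
      exact (hfmaps hx).1.ne (by rw [← hts x, hsx, h₁])
    · rintro ⟨x, hx, hsx⟩
      exact (hfmaps hx).2.ne' (by rw [← hts x, hsx, h₂])
  have hsIcc : MapsTo s (Icc x₁ x₂) (Icc y₁ y₂) := by
    simpa [closure_Ioo (hx₁0.trans hx₂0).ne, closure_Ioo (hy₁0.trans hy₂0).ne] using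
      hsmaps.closure hs
  have hsx₁ : s x₁ = y₁ := by
    rcases eq_endpoints_or_mem_Ioo_of_mem_Icc (hsIcc (left_mem_Icc.2 (hx₁0.trans hx₂0).le))
      with h | h | h
    · exact h
    · exact absurd (hts x₁) (by rw [h, h₂]; exact hf₁₂.ne')
    · exact absurd (hts x₁) (htmaps h).1.ne'
  have hsx₂ : s x₂ = y₂ := by
    rcases eq_endpoints_or_mem_Ioo_of_mem_Icc (hsIcc (right_mem_Icc.2 (hx₁0.trans hx₂0).le))
      with h | h | h
    · exact absurd (hts x₂) (by rw [h, h₁]; exact hf₁₂.ne)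
    · exact h
    · exact absurd (hts x₂) (htmaps h).2.ne
  refine ⟨⟨hx₁, hx₁0, hx₂0, hx₂, ?_⟩, hsx₁, hsx₂⟩
  rw [hsx₁, hsx₂]
  exact hsmaps.image_subset.antisymm <|
    hsx₁ ▸ hsx₂ ▸ intermediate_value_Ioo (hx₁0.trans hx₂0).le hs.continuousOn

lemma IsRadialContourFactor.exists_posRD {f t : ℝ → ℝ} (ht : IsRadialContourFactor f t)
    (hfc : ContinuousOn f (Icc (-1) 1)) (hf0 : f 0 = 0) {x₁ x₂ : ℝ} (hf : PosRD f x₁ x₂) :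
    ∃ y₁ y₂, PosRD t y₁ y₂ ∧ t y₁ = f x₁ ∧ t y₂ = f x₂ := by
  obtain ⟨hx₁, hx₁0, hx₂0, hx₂, himg⟩ := hf
  have hmaps : MapsTo f (Ioo x₁ x₂) (Ioo (f x₁) (f x₂)) := himg ▸ mapsTo_image f _
  obtain ⟨hA, hB⟩ : f x₁ < 0 ∧ 0 < f x₂ := hf0 ▸ hmaps ⟨hx₁0, hx₂0⟩
  obtain ⟨y₂, hy₂, hty₂, hright⟩ :=
    ht.1.exists_exit (hfc.mono (Icc_subset_Icc (by norm_num) le_rfl)) hf0 hA hB ⟨hx₂0, hx₂⟩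
      (fun u hu => hmaps ⟨hx₁0.trans hu.1, hu.2⟩) rfl
  -- the left half, reflected and negated, exits upwards as well
  have hfcL : ContinuousOn (-fun x => f (-x)) (Icc 0 1) :=
    (hfc.comp continuousOn_neg fun x hx => ⟨neg_le_neg hx.2, by linarith [hx.1]⟩).neg
  obtain ⟨z, hz, htz, hleft⟩ := ht.2.neg.exists_exit hfcL (by simp [hf0]) (neg_neg_of_pos hB)
    (neg_pos.2 hA) ⟨neg_pos.2 hx₁0, neg_le.1 hx₁⟩
    (fun u hu => by
      obtain ⟨h₁, h₂⟩ := hmaps ⟨lt_neg.1 hu.2, (neg_neg_of_pos hu.1).trans hx₂0⟩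
      exact ⟨neg_lt_neg h₂, neg_lt_neg h₁⟩)
    (by simp)
  simp only [Pi.neg_apply, neg_inj] at htz
  have htmaps : MapsTo t (Ioo (-z) y₂) (Ioo (f x₁) (f x₂)) := by
    intro u hu
    rcases lt_trichotomy u 0 with hu0 | rfl | hu0
    · obtain ⟨h₁, h₂⟩ := hleft ⟨neg_pos.2 hu0, neg_lt.1 hu.1⟩
      simp only [Pi.neg_apply, neg_neg] at h₁ h₂
      exact ⟨neg_lt_neg_iff.1 h₂, neg_lt_neg_iff.1 h₁⟩
    · rw [ht.1.apply_zero hf0]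
      exact ⟨hA, hB⟩
    · exact hright ⟨hu0, hu.2⟩
  refine ⟨-z, y₂, posRD_of_mapsTo (neg_le_neg hz.2) (neg_neg_of_pos hz.1) hy₂.1 hy₂.2
    (ht.continuousOn.mono (Icc_subset_Icc (neg_le_neg hz.2) hy₂.2)) (htz ▸ hty₂ ▸ htmaps),
    htz, hty₂⟩

theorem stmt14_general (f t : ℝ → ℝ) (hpl : PiecewiseLinear f) (hf0 : f 0 = 0)
    (ht : IsRadialContourFactor f t)
    (x₁ x₂ : ℝ) (hrd : RadialDeparture f x₁ x₂) :
    ∃ y₁ y₂, RadialDeparture t y₁ y₂ ∧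
      ∀ s : ℝ → ℝ, Continuous s → s 0 = 0 → f = t ∘ s →
        PosRD s x₁ x₂ ∧ s x₁ = y₁ ∧ s x₂ = y₂ := by
  rcases hrd with hpos | hneg
  · obtain ⟨y₁, y₂, hty, h₁, h₂⟩ := ht.exists_posRD hpl.continuousOn hf0 hpos
    exact ⟨y₁, y₂, Or.inl hty, fun s hs hs0 hfs => hpos.lift hty h₁ h₂ hs hs0 hfs⟩
  · have hpos : PosRD (-f) x₁ x₂ := posRD_neg_iff.2 hneg
    obtain ⟨y₁, y₂, hty, h₁, h₂⟩ :=
      ht.neg.exists_posRD hpl.continuousOn.neg (by simp [hf0]) hpos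
    exact ⟨y₁, y₂, Or.inr (posRD_neg_iff.1 hty), fun s hs hs0 hfs =>
      hpos.lift hty h₁ h₂ hs hs0 (by rw [hfs]; rfl)⟩

theorem stmt14 (f t : ℝ → ℝ) (hpl : PiecewiseLinear f) (hf0 : f 0 = 0)
    (hnc : NonConstSides f)
    (ht : IsRadialContourFactor f t)
    (x₁ x₂ : ℝ) (hrd : RadialDeparture f x₁ x₂) :
    ∃ y₁ y₂, RadialDeparture t y₁ y₂ ∧
      ∀ s : ℝ → ℝ, Continuous s → s 0 = 0 → f = t ∘ s →
        PosRD s x₁ x₂ ∧ s x₁ = y₁ ∧ s x₂ = y₂ :=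
  stmt14_general f t hpl hf0 ht x₁ x₂ hrd
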